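/- Let k be a perfect field of characteristic p > 0 and let V be a k-vector space equipped with a Frobenius-semilinear endomorphism F which is finitely generated over the twisted polynomial ring k_σ[F]. Let T ⊆ V be the set of torsion elements, i.e. those v for which the family (F^n(v))_{n∈ℕ} is k-linearly dependent. Then T is an F-invariant k-subspace of V which is finite-dimensional over k, and there exists an F-invariant k-subspace W with V the internal direct sum of T and W, together with a finite subset B ⊆ W such that the family (F^n(b))_{n∈ℕ, b∈B} is a k-basis of W; that is, V is the direct sum of a torsion module and a free module over k_σ[F]. -/

import Mathlib

/-!
Modulo the torsion submodule `T` the module becomes torsion-free, since a nonzero element of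
`k_σ[F]` kills `v` modulo `T` only if `v` is torsion. Because `k` is perfect, `k_σ[F]` has a right
division algorithm, so a relation modulo `T` among generators can be run through the Euclidean
algorithm by elementary transformations of the generating family until one generator becomes
torsion and can be dropped. Hence a generating family modulo `T` of minimal length is free modulo
`T`; the span `W` of its iterates is a complement of `T`, and `T ≅ V ⧸ W` is a finitely
generated torsion module, hence finite-dimensional.
-/

open Function Polynomial Set Submodule

namespace FrobeniusSemilinear

variable {k V : Type*} [Field k] [AddCommGroup V] [Module k V] {p : ℕ} {f : AddMonoid.End V}

lemma pow_succ_apply (n : ℕ) (v : V) : (f ^ (n + 1)) v = f ((f ^ n) v) := by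
  rw [pow_succ']
  rfl

lemma pow_apply_smul (hf : ∀ (c : k) (v : V), f (c • v) = c ^ p • f v) (n : ℕ) (c : k)
    (v : V) : (f ^ n) (c • v) = c ^ p ^ n • (f ^ n) v := by
  induction n generalizing v with
  | zero => simp
  | succ n ih =>
    rw [pow_succ_apply, pow_succ_apply, ih, hf, ← pow_mul, ← pow_succ]

lemma pow_add_apply (m n : ℕ) (v : V) : (f ^ (m + n)) v = (f ^ m) ((f ^ n) v) := by
  rw [pow_add]
  rfl

lemma mapsTo_span (hf : ∀ (c : k) (v : V), f (c • v) = c ^ p • f v) {s : Set V}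
    {U : Submodule k V} (hs : MapsTo f s U) : MapsTo f (span k s) U := by
  intro x hx
  induction hx using span_induction with
  | mem y hy => exact hs hy
  | zero => simp
  | add y z _ _ hy hz => rw [map_add]; exact U.add_mem hy hz
  | smul c y _ hy => rw [hf]; exact U.smul_mem _ hy

lemma mapsTo_sup {U W : Submodule k V} (hU : MapsTo f U U) (hW : MapsTo f W W) :
    MapsTo f ↑(U ⊔ W) ↑(U ⊔ W) := by
  intro x hx
  obtain ⟨u, hu, w, hw, rfl⟩ := mem_sup.mp hx
  rw [map_add]
  exact add_mem (mem_sup_left (hU hu)) (mem_sup_right (hW hw))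

variable (f) in
/-- `k[X]` stands for the underlying vector space of `k_σ[F]`, with `X` acting as `f`. -/
noncomputable def polyAct (v : V) : k[X] →ₗ[k] V :=
  lsum fun n => LinearMap.toSpanSingleton k V ((f ^ n) v)

lemma polyAct_apply (v : V) (P : k[X]) : polyAct f v P = P.sum fun n a => a • (f ^ n) v :=
  rfl

@[simp]
lemma polyAct_monomial (v : V) (n : ℕ) (c : k) : polyAct f v (monomial n c) = c • (f ^ n) v := by
  simp [polyAct_apply]

@[simp]
lemma polyAct_zero : polyAct f (0 : V) = (0 : k[X] →ₗ[k] V) := by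
  ext n
  simp

lemma polyAct_add (u w : V) (P : k[X]) : polyAct f (u + w) P = polyAct f u P + polyAct f w P := by
  induction P using Polynomial.induction_on' with
  | add P Q hP hQ => simp only [map_add, hP, hQ]; abel
  | monomial n c => simp [smul_add]

lemma polyAct_mem_span (v : V) (P : k[X]) :
    polyAct f v P ∈ span k (range fun n => (f ^ n) v) :=
  sum_mem fun n _ => smul_mem _ _ (subset_span ⟨n, rfl⟩)

variable (p) in
/-- The product `B · x Fᵉ` in `k_σ[F]`, where `F c = c ^ p F`. -/
noncomputable def mulMonomial (B : k[X]) (e : ℕ) (x : k) : k[X] :=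
  B.sum fun i b => monomial (i + e) (b * x ^ p ^ i)

lemma polyAct_mulMonomial (hf : ∀ (c : k) (v : V), f (c • v) = c ^ p • f v) (v : V)
    (B : k[X]) (e : ℕ) (x : k) :
    polyAct f v (mulMonomial p B e x) = polyAct f (x • (f ^ e) v) B := by
  rw [mulMonomial, Polynomial.sum, map_sum, polyAct_apply, Polynomial.sum]
  simp only [polyAct_monomial, pow_apply_smul hf, pow_add_apply, smul_smul]

lemma natDegree_mulMonomial_le (B : k[X]) (e : ℕ) (x : k) :
    (mulMonomial p B e x).natDegree ≤ B.natDegree + e :=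
  natDegree_sum_le_of_forall_le _ _ fun i hi =>
    (natDegree_monomial_le _).trans (by have := le_natDegree_of_mem_supp i hi; omega)

lemma coeff_mulMonomial_natDegree_add (B : k[X]) (e : ℕ) (x : k) :
    (mulMonomial p B e x).coeff (B.natDegree + e) = B.leadingCoeff * x ^ p ^ B.natDegree := by
  rw [mulMonomial, Polynomial.sum, finsetSum_coeff, Finset.sum_eq_single B.natDegree]
  · rw [coeff_monomial_same]; rfl
  · intro i _ hi
    rw [coeff_monomial, if_neg (by omega)]
  · intro h
    simp [notMem_support_iff.mp h]

/-- The leading coefficient of `B · x Fᵉ` is `lc B * x ^ p ^ deg B`, so cancelling the leading term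
of `A` takes a `p ^ deg B`-th root. -/
lemma exists_degree_sub_mulMonomial_lt [ExpChar k p] [PerfectRing k p] {A B : k[X]}
    (hB : B ≠ 0) (hBA : B.degree ≤ A.degree) :
    ∃ e x, (A - mulMonomial p B e x).degree < A.degree := by
  have hA : A ≠ 0 := by rintro rfl; simp_all
  have hle : B.natDegree ≤ A.natDegree := natDegree_le_natDegree hBA
  obtain ⟨x, hx⟩ := (bijective_iterateFrobenius k p B.natDegree).surjective
    (A.leadingCoeff / B.leadingCoeff)
  rw [iterateFrobenius_def] at hx
  have hde : B.natDegree + (A.natDegree - B.natDegree) = A.natDegree := by omega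
  set M := mulMonomial p B (A.natDegree - B.natDegree) x
  have hMcoeff : M.coeff A.natDegree = A.leadingCoeff := by
    rw [← hde, coeff_mulMonomial_natDegree_add, hx, mul_div_cancel₀ _ (leadingCoeff_ne_zero.mpr hB)]
  have hMdeg : M.natDegree = A.natDegree :=
    natDegree_eq_of_le_of_coeff_ne_zero ((natDegree_mulMonomial_le ..).trans_eq hde)
      (by rw [hMcoeff]; exact leadingCoeff_ne_zero.mpr hA)
  have hM : M ≠ 0 := by
    rintro h; rw [h, coeff_zero] at hMcoeff; exact leadingCoeff_ne_zero.mpr hA hMcoeff.symm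
  have hMlc : M.leadingCoeff = A.leadingCoeff := by rw [leadingCoeff, hMdeg, hMcoeff]
  refine ⟨A.natDegree - B.natDegree, x, degree_sub_lt_left ?_ hA hMlc.symm⟩
  rw [degree_eq_natDegree hA, degree_eq_natDegree hM, hMdeg]

/-- Right division with remainder `A = B Q + R` in `k_σ[F]`. -/
theorem exists_polyAct_eq_polyAct_add [ExpChar k p] [PerfectRing k p]
    (hf : ∀ (c : k) (v : V), f (c • v) = c ^ p • f v) {B : k[X]} (hB : B ≠ 0) (A : k[X]) :
    ∃ Q R : k[X], R.degree < B.degree ∧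
      ∀ v, polyAct f v A = polyAct f (polyAct f v Q) B + polyAct f v R := by
  induction hd : A.degree using WellFoundedLT.induction generalizing A with
  | ind d ih =>
  subst hd
  by_cases hlt : A.degree < B.degree
  · exact ⟨0, A, hlt, fun v => by simp⟩
  obtain ⟨e, x, hAM⟩ := exists_degree_sub_mulMonomial_lt (p := p) hB (not_lt.mp hlt)
  obtain ⟨Q, R, hR, hQR⟩ := ih _ hAM _ rfl
  refine ⟨Q + monomial e x, R, hR, fun v => ?_⟩
  rw [← sub_add_cancel A (mulMonomial p B e x), map_add, hQR, polyAct_mulMonomial hf, map_add,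
    polyAct_monomial, polyAct_add]
  abel

variable (k f) in
def torsion : Submodule k V where
  carrier := {v | ∃ U : Submodule k V, FiniteDimensional k U ∧ v ∈ U ∧ MapsTo f U U}
  zero_mem' := ⟨⊥, inferInstance, zero_mem _, fun x hx => by simp_all⟩
  add_mem' := by
    rintro a b ⟨U, _, ha, hU⟩ ⟨W, _, hb, hW⟩
    exact ⟨U ⊔ W, inferInstance, add_mem (mem_sup_left ha) (mem_sup_right hb), mapsTo_sup hU hW⟩
  smul_mem' := by
    rintro c v ⟨U, hUf, hv, hU⟩
    exact ⟨U, hUf, U.smul_mem c hv, hU⟩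

lemma mapsTo_torsion : MapsTo f (torsion k f) (torsion k f) :=
  fun _ ⟨U, hUf, hv, hU⟩ => ⟨U, hUf, hU hv, hU⟩

lemma mem_torsion_of_iterate_mem (hf : ∀ (c : k) (v : V), f (c • v) = c ^ p • f v)
    {U : Submodule k V} [FiniteDimensional k U] (hU : MapsTo f U U) {v : V} {d : ℕ}
    (hd : (f ^ d) v ∈ span k ((fun j => (f ^ j) v) '' Iio d) ⊔ U) : v ∈ torsion k f := by
  set W := span k ((fun j => (f ^ j) v) '' Iio d) ⊔ U
  have : FiniteDimensional k W :=
    have := FiniteDimensional.span_of_finite k ((finite_Iio d).image fun j => (f ^ j) v)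
    inferInstance
  have hW : MapsTo f W W := by
    intro x hx
    obtain ⟨a, ha, u, hu, rfl⟩ := mem_sup.mp hx
    rw [map_add]
    refine add_mem (mapsTo_span hf ?_ ha) (mem_sup_right (hU hu))
    rintro _ ⟨j, hj, rfl⟩
    rw [← pow_succ_apply]
    rcases (Nat.succ_le_of_lt hj).lt_or_eq with h | h
    · exact mem_sup_left (subset_span ⟨j + 1, h, rfl⟩)
    · obtain rfl : j + 1 = d := h
      exact hd
  refine ⟨W, this, ?_, hW⟩
  rcases d.eq_zero_or_pos with rfl | hd0
  · simpa using hd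
  · exact mem_sup_left (subset_span ⟨0, hd0, by simp⟩)

lemma mem_torsion_of_polyAct_mem (hf : ∀ (c : k) (v : V), f (c • v) = c ^ p • f v)
    {P : k[X]} (hP : P ≠ 0) {v : V} (h : polyAct f v P ∈ torsion k f) : v ∈ torsion k f := by
  obtain ⟨U, _, hPU, hU⟩ := h
  refine mem_torsion_of_iterate_mem hf hU (d := P.natDegree) ?_
  have hsplit := congrArg (polyAct f v) (eraseLead_add_monomial_natDegree_leadingCoeff P)
  rw [map_add, polyAct_monomial] at hsplit
  have hlead : (f ^ P.natDegree) v =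
      P.leadingCoeff⁻¹ • (polyAct f v P - polyAct f v P.eraseLead) := by
    rw [← hsplit, add_sub_cancel_left, inv_smul_smul₀ (leadingCoeff_ne_zero.mpr hP)]
  rw [hlead]
  refine smul_mem _ _ (sub_mem (mem_sup_right hPU) (mem_sup_left ?_))
  refine sum_mem fun n hn => smul_mem _ _ (subset_span ⟨n, ?_, rfl⟩)
  rw [eraseLead_support, Finset.mem_erase] at hn
  exact lt_of_le_of_ne (le_natDegree_of_mem_supp n hn.2) hn.1

lemma mem_torsion_iff (hf : ∀ (c : k) (v : V), f (c • v) = c ^ p • f v) {v : V} :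
    v ∈ torsion k f ↔ ¬ LinearIndependent k fun n => (f ^ n) v := by
  constructor
  · rintro ⟨U, _, hv, hU⟩ hli
    have hmem (n : ℕ) : (f ^ n) v ∈ U := by
      rw [AddMonoid.End.coe_pow]
      exact hU.iterate n hv
    exact Module.Finite.not_linearIndependent_of_infinite (fun n => (⟨_, hmem n⟩ : U))
      (LinearIndependent.of_comp U.subtype hli)
  · intro h
    rw [linearIndependent_iff'] at h
    push Not at h
    obtain ⟨s, g, hsum, i, hi, hgi⟩ := h
    refine mem_torsion_of_polyAct_mem hf (P := ∑ n ∈ s, monomial n (g n)) (fun h0 => hgi ?_) ?_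
    · simpa [finsetSum_coeff, coeff_monomial, hi] using congrArg (coeff · i) h0
    · simp only [map_sum, polyAct_monomial, hsum]
      exact zero_mem _

section IterateSpan

variable {ι ι' : Type*}

variable (f) in
def iterates (b : ι → V) : ℕ × ι → V := fun x => (f ^ x.1) (b x.2)

variable (k f) in
def iterateSpan (b : ι → V) : Submodule k V := span k (range (iterates f b))

lemma iterate_mem_iterateSpan (b : ι → V) (n : ℕ) (i : ι) : (f ^ n) (b i) ∈ iterateSpan k f b :=
  subset_span ⟨(n, i), rfl⟩

lemma mem_iterateSpan (b : ι → V) (i : ι) : b i ∈ iterateSpan k f b := by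
  simpa using iterate_mem_iterateSpan (k := k) (f := f) b 0 i

lemma polyAct_mem_iterateSpan (b : ι → V) (i : ι) (P : k[X]) :
    polyAct f (b i) P ∈ iterateSpan k f b :=
  span_le.mpr (by rintro _ ⟨n, rfl⟩; exact iterate_mem_iterateSpan b n i) (polyAct_mem_span _ _)

lemma mapsTo_iterateSpan (hf : ∀ (c : k) (v : V), f (c • v) = c ^ p • f v) (b : ι → V) :
    MapsTo f (iterateSpan k f b) (iterateSpan k f b) :=
  mapsTo_span hf <| by
    rintro _ ⟨⟨n, i⟩, rfl⟩
    rw [iterates, ← pow_succ_apply]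
    exact iterate_mem_iterateSpan b _ i

lemma iterateSpan_le {U : Submodule k V} (hU : MapsTo f U U) {b : ι → V} (hb : ∀ i, b i ∈ U) :
    iterateSpan k f b ≤ U :=
  span_le.mpr <| by
    rintro _ ⟨⟨n, i⟩, rfl⟩
    simpa [iterates] using hU.iterate n (hb i)

lemma iterateSpan_comp_of_surjective {e : ι' → ι} (he : Surjective e) (b : ι → V) :
    iterateSpan k f (b ∘ e) = iterateSpan k f b :=
  congrArg (span k) ((Surjective.prodMap surjective_id he).range_comp (iterates f b))

lemma finiteDimensional_iterateSpan [Finite ι] {b : ι → V} (hb : ∀ i, b i ∈ torsion k f) :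
    FiniteDimensional k (iterateSpan k f b) := by
  choose U hUfin hbU hU using hb
  refine Submodule.finiteDimensional_of_le (S₂ := ⨆ i, U i) (span_le.mpr ?_)
  rintro _ ⟨⟨n, i⟩, rfl⟩
  exact mem_iSup_of_mem i (by simpa [iterates] using (hU i).iterate n (hbU i))

lemma injective_of_linearIndependent_iterates {b : ι → V}
    (hb : LinearIndependent k (iterates f b)) : Injective b := fun i j h =>
  (Prod.ext_iff.mp (hb.injective (a₁ := (0, i)) (a₂ := (0, j)) (by simp [iterates, h]))).2

lemma exists_finset_iterateSpan_eq [Fintype ι] {b : ι → V}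
    (hb : LinearIndependent k (iterates f b)) :
    ∃ B : Finset V, (B : Set V) ⊆ iterateSpan k f b ∧
      LinearIndependent k (iterates f ((↑) : B → V)) ∧
      iterateSpan k f ((↑) : B → V) = iterateSpan k f b := by
  classical
  have hbij : Bijective fun i => (⟨b i, Finset.mem_image_of_mem b (Finset.mem_univ i)⟩ :
      Finset.univ.image b) :=
    ⟨fun i j h => injective_of_linearIndependent_iterates hb (congrArg Subtype.val h), by
      rintro ⟨_, hx⟩
      obtain ⟨i, -, rfl⟩ := Finset.mem_image.mp hx
      exact ⟨i, rfl⟩⟩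
  set e := Equiv.ofBijective _ hbij
  refine ⟨Finset.univ.image b, ?_, ?_, ?_⟩
  · intro x hx
    obtain ⟨i, -, rfl⟩ := Finset.mem_image.mp hx
    exact mem_iterateSpan b i
  · have : iterates f ((↑) : Finset.univ.image b → V) ∘ (Equiv.refl ℕ).prodCongr e =
        iterates f b := rfl
    rwa [← linearIndependent_equiv ((Equiv.refl ℕ).prodCongr e), this]
  · rw [← iterateSpan_comp_of_surjective e.surjective]
    rfl

end IterateSpan

section Generation

variable {ι ι' : Type*}

lemma sup_iterateSpan_le (hf : ∀ (c : k) (v : V), f (c • v) = c ^ p • f v) {b : ι → V}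
    {b' : ι' → V} (hb : ∀ i, b i ∈ torsion k f ⊔ iterateSpan k f b') :
    torsion k f ⊔ iterateSpan k f b ≤ torsion k f ⊔ iterateSpan k f b' :=
  sup_le le_sup_left (iterateSpan_le (mapsTo_sup mapsTo_torsion (mapsTo_iterateSpan hf b')) hb)

variable [DecidableEq ι]

lemma generating_update (hf : ∀ (c : k) (v : V), f (c • v) = c ^ p • f v) {b : ι → V}
    (hgen : torsion k f ⊔ iterateSpan k f b = ⊤) {i j : ι} (hij : i ≠ j) (Q : k[X]) :
    torsion k f ⊔ iterateSpan k f (update b i (b i + polyAct f (b j) Q)) = ⊤ := by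
  refine eq_top_iff.mpr (hgen ▸ sup_iterateSpan_le hf fun l => mem_sup_right ?_)
  set b' := update b i (b i + polyAct f (b j) Q)
  rcases eq_or_ne l i with rfl | hl
  · have hbl : b l = b' l - polyAct f (b' j) Q := by simp [b', hij.symm]
    rw [hbl]
    exact sub_mem (mem_iterateSpan b' l) (polyAct_mem_iterateSpan b' j Q)
  · simpa [b', hl] using mem_iterateSpan (k := k) (f := f) b' l

/-- The elementary transformation `bᵢ ↦ bᵢ + Q bⱼ` turns the relation `P` into one whose
`j`-th entry is the remainder `Pⱼ - Pᵢ Q`. -/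
lemma sum_polyAct_update [Fintype ι] (b : ι → V) (P : ι → k[X]) {i j : ι} (hij : i ≠ j)
    {Q R : k[X]} (hQR : ∀ v, polyAct f v (P j) = polyAct f (polyAct f v Q) (P i) + polyAct f v R) :
    ∑ l, polyAct f (update b i (b i + polyAct f (b j) Q) l) (update P j R l) =
      ∑ l, polyAct f (b l) (P l) := by
  have hterm (l : ι) : polyAct f (update b i (b i + polyAct f (b j) Q) l) (update P j R l) =
      polyAct f (b l) (P l) + (Pi.single i (polyAct f (polyAct f (b j) Q) (P i)) : ι → V) l +
        (Pi.single j (polyAct f (b j) R - polyAct f (b j) (P j)) : ι → V) l := by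
    rcases eq_or_ne l i with rfl | hli
    · simp [hij, polyAct_add]
    rcases eq_or_ne l j with rfl | hlj
    · simp [hli]
    · simp [hli, hlj]
  simp only [hterm, Finset.sum_add_distrib, Finset.sum_pi_single', Finset.mem_univ, if_true, hQR]
  abel

end Generation

/-- Induction on the vector of degrees of the relation, which each Euclidean step lowers in one
entry. -/
theorem exists_shorter_generating [ExpChar k p] [PerfectRing k p]
    (hf : ∀ (c : k) (v : V), f (c • v) = c ^ p • f v) {m : ℕ} (b : Fin m → V)
    (hgen : torsion k f ⊔ iterateSpan k f b = ⊤) (P : Fin m → k[X]) (hP : P ≠ 0)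
    (hrel : ∑ i, polyAct f (b i) (P i) ∈ torsion k f) :
    ∃ n < m, ∃ b' : Fin n → V, torsion k f ⊔ iterateSpan k f b' = ⊤ := by
  induction hd : (fun i => (P i).degree) using WellFoundedLT.induction generalizing b P with
  | ind d ih =>
  subst hd
  obtain ⟨i, hi⟩ := Function.ne_iff.mp hP
  by_cases hsingle : ∀ j, j ≠ i → P j = 0
  · obtain ⟨n, rfl⟩ := Nat.exists_eq_add_one_of_ne_zero i.pos.ne'
    have hbi : b i ∈ torsion k f := by
      refine mem_torsion_of_polyAct_mem hf hi ?_
      rwa [Finset.sum_eq_single i (fun j _ hj => by rw [hsingle j hj, map_zero]) (by simp)]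
        at hrel
    refine ⟨n, n.lt_succ_self, b ∘ i.succAbove,
      eq_top_iff.mpr (hgen ▸ sup_iterateSpan_le hf fun l => ?_)⟩
    rcases eq_or_ne l i with rfl | hl
    · exact mem_sup_left hbi
    · obtain ⟨l', rfl⟩ := Fin.exists_succAbove_eq hl
      exact mem_sup_right (mem_iterateSpan (b ∘ i.succAbove) l')
  push Not at hsingle
  obtain ⟨j, hji, hj⟩ := hsingle
  wlog hdeg : (P i).degree ≤ (P j).degree generalizing i j
  · exact this j hj i hji.symm hi (le_of_not_ge hdeg)
  obtain ⟨Q, R, hR, hQR⟩ := exists_polyAct_eq_polyAct_add hf hi (P j)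
  refine ih _ ?_ _ (generating_update hf hgen hji.symm Q) (update P j R) ?_ ?_ rfl
  · rw [show (fun l => (update P j R l).degree) = update (fun l => (P l).degree) j R.degree from
      funext (apply_update (fun _ => degree) P j R), update_lt_self_iff]
    exact hR.trans_le hdeg
  · exact fun h => hi (by simpa [hji.symm] using congrFun h i)
  · rwa [sum_polyAct_update b P hji.symm hQR]

lemma exists_polyAct_relation {ι : Type*} [Fintype ι] [DecidableEq ι] (b : ι → V)
    (l : ℕ × ι →₀ k) :
    ∃ P : ι → k[X], ∑ i, polyAct f (b i) (P i) = Finsupp.linearCombination k (iterates f b) l ∧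
      ∀ x : ℕ × ι, (P x.2).coeff x.1 = l x := by
  refine ⟨fun i => l.sum fun x c => if x.2 = i then monomial x.1 c else 0, ?_, fun x => ?_⟩
  · simp [apply_ite, Finsupp.linearCombination_apply, iterates, Finsupp.sum,
      Finset.sum_comm (s := Finset.univ)]
  · dsimp only
    rw [Finsupp.sum, finsetSum_coeff, Finset.sum_eq_single x]
    · simp
    · intro y _ hy
      split_ifs with h
      · rw [coeff_monomial, if_neg fun h' => hy (Prod.ext h' h)]
      · rw [coeff_zero]
    · intro hx
      simp [Finsupp.notMem_support_iff.mp hx]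

theorem exists_generating_linearIndependent [ExpChar k p] [PerfectRing k p]
    (hf : ∀ (c : k) (v : V), f (c • v) = c ^ p • f v)
    (hfg : ∃ m, ∃ b : Fin m → V, torsion k f ⊔ iterateSpan k f b = ⊤) :
    ∃ m, ∃ b : Fin m → V, torsion k f ⊔ iterateSpan k f b = ⊤ ∧
      LinearIndependent k ((torsion k f).mkQ ∘ iterates f b) := by
  classical
  obtain ⟨b, hgen⟩ := Nat.find_spec hfg
  refine ⟨_, b, hgen, linearIndependent_iff.mpr fun l hl => by_contra fun hl0 => ?_⟩
  obtain ⟨P, hsum, hcoeff⟩ := exists_polyAct_relation (f := f) b l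
  have hP : P ≠ 0 := fun h => hl0 (Finsupp.ext fun x => by simp [← hcoeff, h])
  have hrel : ∑ i, polyAct f (b i) (P i) ∈ torsion k f := by
    rwa [hsum, ← Submodule.Quotient.mk_eq_zero, ← mkQ_apply, Finsupp.apply_linearCombination]
  obtain ⟨n, hn, b', hgen'⟩ := exists_shorter_generating hf b hgen P hP hrel
  exact Nat.find_min hfg hn ⟨b', hgen'⟩

/-- The projection onto the torsion part along an `f`-stable complement commutes with `f`, so the
torsion part is spanned by the iterates of the (torsion) projections of finitely many generators. -/
theorem finiteDimensional_torsion {W : Submodule k V} (hW : MapsTo f W W)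
    (hTW : IsCompl (torsion k f) W) {ι : Type*} [Finite ι] {s : ι → V}
    (hs : iterateSpan k f s = ⊤) : FiniteDimensional k (torsion k f) := by
  set π := (torsion k f).projection W hTW
  have hπ (v : V) : π (f v) = f (π v) := by
    obtain ⟨t, ht, w, hw, rfl⟩ := mem_sup.mp (hTW.sup_eq_top ▸ mem_top : v ∈ torsion k f ⊔ W)
    rw [map_add, map_add, map_add, projection_apply_of_mem_left hTW ht,
      projection_apply_of_mem_right hTW hw, projection_apply_of_mem_left hTW (mapsTo_torsion ht),
      projection_apply_of_mem_right hTW (hW hw), add_zero, add_zero]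
  have hπpow (n : ℕ) (v : V) : π ((f ^ n) v) = (f ^ n) (π v) := by
    induction n with
    | zero => simp
    | succ n ih => rw [pow_succ_apply, hπ, ih, pow_succ_apply]
  have hT : torsion k f = iterateSpan k f (π ∘ s) := by
    rw [← range_projection hTW, LinearMap.range_eq_map, ← hs, iterateSpan, map_span, ← range_comp]
    exact congrArg (span k ∘ range) (funext fun x => hπpow x.1 (s x.2))
  rw [hT]
  exact finiteDimensional_iterateSpan fun i => projection_apply_mem hTW (s i)

end FrobeniusSemilinear

open FrobeniusSemilinear in
theorem stmt_5 (p : ℕ) [Fact p.Prime] (k : Type*) [Field k] [CharP k p] [PerfectRing k p]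
    (V : Type*) [AddCommGroup V] [Module k V]
    (F : V → V)
    (hFadd : ∀ x y : V, F (x + y) = F x + F y)
    (hFsmul : ∀ (c : k) (v : V), F (c • v) = c ^ p • F v)
    (hfg : ∃ S : Finset V,
      Submodule.span k (Set.range fun ns : ℕ × S => F^[ns.1] (ns.2 : V)) = ⊤) :
    ∃ T : Submodule k V,
      (T : Set V) = {v : V | ¬ LinearIndependent k fun n : ℕ => F^[n] v} ∧
      (∀ v ∈ T, F v ∈ T) ∧
      FiniteDimensional k T ∧
      ∃ W : Submodule k V,
        (∀ v ∈ W, F v ∈ W) ∧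
        IsCompl T W ∧
        ∃ B : Finset V, (B : Set V) ⊆ (W : Set V) ∧
          LinearIndependent k (fun nb : ℕ × B => F^[nb.1] (nb.2 : V)) ∧
          Submodule.span k (Set.range fun nb : ℕ × B => F^[nb.1] (nb.2 : V)) = W := by
  set f : AddMonoid.End V := AddMonoidHom.mk' F hFadd
  have hf : ∀ (c : k) (v : V), f (c • v) = c ^ p • f v := hFsmul
  have hiter (n : ℕ) : F^[n] = ⇑(f ^ n) := (AddMonoid.End.coe_pow _ f n).symm
  simp only [hiter] at hfg ⊢
  obtain ⟨S, hS⟩ := hfg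
  have hSfin : iterateSpan k f (Subtype.val ∘ S.equivFin.symm) = ⊤ :=
    (iterateSpan_comp_of_surjective S.equivFin.symm.surjective _).trans hS
  obtain ⟨m, b, hgen, hli⟩ :=
    exists_generating_linearIndependent hf ⟨_, _, by rw [hSfin, sup_top_eq]⟩
  have hTW : IsCompl (torsion k f) (iterateSpan k f b) :=
    ⟨ker_mkQ (torsion k f) ▸ (range_ker_disjoint hli).symm, codisjoint_iff.mpr hgen⟩
  obtain ⟨B, hBW, hBli, hBspan⟩ := exists_finset_iterateSpan_eq hli.of_comp
  exact ⟨torsion k f, Set.ext fun v => mem_torsion_iff hf, fun v hv => mapsTo_torsion hv,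
    finiteDimensional_torsion (mapsTo_iterateSpan hf b) hTW hSfin, iterateSpan k f b,
    fun v hv => mapsTo_iterateSpan hf b hv, hTW, B, hBW, hBli, hBspan⟩
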